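/- arXiv:1406.3796 — 4 statements merged into one kernel-verified Lean document; each statement's English description precedes it below -/
import Mathlib

section
/- For any perfect matching M of a graph G with maximum degree Δ, the forcing number f(G,M) is at most the anti-forcing number af(G,M), which in turn is at most (Δ−1)·f(G,M). -/
open SimpleGraph

variable {V : Type*}

/-- A closed walk is an `M`-alternating cycle: it is a cycle and its edges alternate
(cyclically) between `M` and the complement of `M`. -/
def SimpleGraph.IsAltCycle (G : SimpleGraph V) (M : Set (Sym2 V)) {v : V} (c : G.Walk v v) :
    Prop :=
  c.IsCycle ∧ List.Chain' (fun e f => (e ∈ M ↔ f ∉ M)) c.edges ∧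
    ∀ e f, c.edges.head? = some e → c.edges.getLast? = some f → (f ∈ M ↔ e ∉ M)

/-- `S` is a forcing set of the perfect matching `M`: `S ⊆ M` and `M` is the unique
perfect matching of `G` containing `S`. -/
def SimpleGraph.IsForcingSet (G : SimpleGraph V) (M : G.Subgraph) (S : Set (Sym2 V)) : Prop :=
  S ⊆ M.edgeSet ∧ ∀ N : G.Subgraph, N.IsPerfectMatching → S ⊆ N.edgeSet → N = M

/-- `S` is an anti-forcing set of the perfect matching `M`: `S` consists of edges of `G`
not in `M`, and `M` is the unique perfect matching of `G - S` (equivalently, the unique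
perfect matching of `G` whose edge set avoids `S`). -/
def SimpleGraph.IsAntiForcingSet (G : SimpleGraph V) (M : G.Subgraph) (S : Set (Sym2 V)) :
    Prop :=
  S ⊆ G.edgeSet \ M.edgeSet ∧
    ∀ N : G.Subgraph, N.IsPerfectMatching → Disjoint N.edgeSet S → N = M

/-- The forcing number `f(G,M)`. -/
noncomputable def SimpleGraph.forcingNum (G : SimpleGraph V) (M : G.Subgraph) : ℕ :=
  sInf {n | ∃ S : Set (Sym2 V), G.IsForcingSet M S ∧ S.ncard = n}

/-- The anti-forcing number `af(G,M)`. -/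
noncomputable def SimpleGraph.antiForcingNum (G : SimpleGraph V) (M : G.Subgraph) : ℕ :=
  sInf {n | ∃ S : Set (Sym2 V), G.IsAntiForcingSet M S ∧ S.ncard = n}

/-!
Both inequalities exchange edges at a common endpoint, using that a perfect matching has exactly
one edge at each vertex. An anti-forcing set `T` yields the forcing set consisting of the
`M`-edges at one endpoint of each edge of `T`: a perfect matching containing these edges cannot
use any edge of `T`, so it is `M`. Conversely, a forcing set `S` yields the anti-forcing set of
all edges other than `e` at one endpoint of each `e ∈ S`, at most `Δ - 1` per edge: a perfect
matching avoiding them has to contain `S`, so it is `M`.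
-/

namespace SimpleGraph

variable {G : SimpleGraph V} {M N : G.Subgraph}

lemma Subgraph.IsMatching.eq_of_mem_edgeSet (hM : M.IsMatching) {v : V} {e f : Sym2 V}
    (he : e ∈ M.edgeSet) (hf : f ∈ M.edgeSet) (hve : v ∈ e) (hvf : v ∈ f) : e = f := by
  obtain ⟨w, rfl⟩ := Sym2.mem_iff_exists.mp hve
  obtain ⟨w', rfl⟩ := Sym2.mem_iff_exists.mp hvf
  rw [hM.eq_of_adj_left (Subgraph.mem_edgeSet.mp he) (Subgraph.mem_edgeSet.mp hf)]

lemma Subgraph.IsPerfectMatching.exists_mem_edgeSet (hM : M.IsPerfectMatching) (v : V) :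
    ∃ e ∈ M.edgeSet, v ∈ e :=
  let ⟨w, hvw, _⟩ := hM.1 (hM.2 v)
  ⟨s(v, w), hvw, Sym2.mem_mk_left v w⟩

lemma Subgraph.IsPerfectMatching.eq_of_edgeSet_subset (hM : M.IsPerfectMatching)
    (hN : N.IsPerfectMatching) (h : M.edgeSet ⊆ N.edgeSet) : M = N := by
  refine IsMatching.injOn_edgeSet hM.1 hN.1 (h.antisymm fun e he => ?_)
  obtain ⟨f, hfM, hf⟩ := hM.exists_mem_edgeSet e.out.1
  rwa [hN.1.eq_of_mem_edgeSet he (h hfM) e.out_fst_mem hf]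

lemma isForcingSet_edgeSet (hM : M.IsPerfectMatching) : G.IsForcingSet M M.edgeSet :=
  ⟨subset_rfl, fun _ hN h => (hM.eq_of_edgeSet_subset hN h).symm⟩

lemma isAntiForcingSet_edgeSet_sdiff (hM : M.IsPerfectMatching) :
    G.IsAntiForcingSet M (G.edgeSet \ M.edgeSet) := by
  refine ⟨subset_rfl, fun N hN hdisj => hN.eq_of_edgeSet_subset hM fun e he => ?_⟩
  by_contra heM
  exact Set.disjoint_left.mp hdisj he ⟨N.edgeSet_subset he, heM⟩

lemma forcingNum_le_ncard {S : Set (Sym2 V)} (hS : G.IsForcingSet M S) :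
    G.forcingNum M ≤ S.ncard :=
  Nat.sInf_le ⟨S, hS, rfl⟩

lemma antiForcingNum_le_ncard {T : Set (Sym2 V)} (hT : G.IsAntiForcingSet M T) :
    G.antiForcingNum M ≤ T.ncard :=
  Nat.sInf_le ⟨T, hT, rfl⟩

lemma exists_isForcingSet_ncard_eq_forcingNum (hM : M.IsPerfectMatching) :
    ∃ S, G.IsForcingSet M S ∧ S.ncard = G.forcingNum M :=
  Nat.sInf_mem (s := {n | ∃ S : Set (Sym2 V), G.IsForcingSet M S ∧ S.ncard = n})
    ⟨_, _, isForcingSet_edgeSet hM, rfl⟩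

lemma exists_isAntiForcingSet_ncard_eq_antiForcingNum (hM : M.IsPerfectMatching) :
    ∃ T, G.IsAntiForcingSet M T ∧ T.ncard = G.antiForcingNum M :=
  Nat.sInf_mem (s := {n | ∃ T : Set (Sym2 V), G.IsAntiForcingSet M T ∧ T.ncard = n})
    ⟨_, _, isAntiForcingSet_edgeSet_sdiff hM, rfl⟩

lemma IsAntiForcingSet.exists_isForcingSet_ncard_le (hM : M.IsPerfectMatching)
    {T : Set (Sym2 V)} (hT : G.IsAntiForcingSet M T) (hTfin : T.Finite) :
    ∃ S, G.IsForcingSet M S ∧ S.ncard ≤ T.ncard := by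
  choose m hmM hvm using hM.exists_mem_edgeSet
  refine ⟨(fun e => m e.out.1) '' T, ⟨?_, fun N hN hSN => ?_⟩, Set.ncard_image_le hTfin⟩
  · rintro _ ⟨e, -, rfl⟩
    exact hmM _
  · by_contra hNM
    obtain ⟨e, heN, heT⟩ := Set.not_disjoint_iff.mp fun hdisj => hNM (hT.2 N hN hdisj)
    have hme : m e.out.1 = e :=
      hN.1.eq_of_mem_edgeSet (hSN ⟨e, heT, rfl⟩) heN (hvm _) e.out_fst_mem
    exact (hT.1 heT).2 (hme ▸ hmM _)

lemma IsForcingSet.exists_isAntiForcingSet_ncard_le [Fintype V] [DecidableRel G.Adj]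
    (hM : M.IsMatching) {S : Set (Sym2 V)} (hS : G.IsForcingSet M S) :
    ∃ T, G.IsAntiForcingSet M T ∧ T.ncard ≤ (G.maxDegree - 1) * S.ncard := by
  classical
  set A : Sym2 V → Set (Sym2 V) := fun e => G.incidenceSet e.out.1 \ {e}
  have hA_card (e : Sym2 V) (he : e ∈ S) : (A e).ncard ≤ G.maxDegree - 1 := by
    have he_inc : e ∈ G.incidenceSet e.out.1 := ⟨M.edgeSet_subset (hS.1 he), e.out_fst_mem⟩
    rw [Set.ncard_sdiff_singleton_of_mem he_inc, ← coe_incidenceFinset, Set.ncard_coe_finset,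
      card_incidenceFinset_eq_degree]
    exact Nat.sub_le_sub_right (G.degree_le_maxDegree _) 1
  refine ⟨⋃ e ∈ S.toFinset, A e, ⟨?_, fun N hN hdisj => hS.2 N hN fun e he => ?_⟩, ?_⟩
  · simp only [Set.subset_def, Set.mem_iUnion]
    rintro f ⟨e, he, ⟨hfG, hf⟩, hfe⟩
    exact ⟨hfG, fun hfM => hfe (hM.eq_of_mem_edgeSet hfM (hS.1 (by simpa using he))
      hf e.out_fst_mem)⟩
  · obtain ⟨f, hfN, hf⟩ := hN.exists_mem_edgeSet e.out.1
    by_cases hfe : f = e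
    · exact hfe ▸ hfN
    · have hfA : f ∈ A e := ⟨⟨N.edgeSet_subset hfN, hf⟩, hfe⟩
      exact absurd (Set.mem_biUnion (by simpa using he) hfA) (Set.disjoint_left.mp hdisj hfN)
  · calc (⋃ e ∈ S.toFinset, A e).ncard ≤ ∑ e ∈ S.toFinset, (A e).ncard :=
          Finset.set_ncard_biUnion_le _ _
      _ ≤ ∑ _e ∈ S.toFinset, (G.maxDegree - 1) :=
          Finset.sum_le_sum fun e he => hA_card e (by simpa using he)
      _ = (G.maxDegree - 1) * S.ncard := by
          rw [Finset.sum_const, smul_eq_mul, mul_comm, Set.ncard_eq_toFinset_card']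

end SimpleGraph

/-- For any perfect matching `M` of a graph `G` with maximum degree `Δ`,
`f(G,M) ≤ af(G,M) ≤ (Δ−1)·f(G,M)`. -/
theorem forcing_le_antiforcing_le (G : SimpleGraph V) [Fintype V] [DecidableRel G.Adj]
    (M : G.Subgraph) (hM : M.IsPerfectMatching) :
    G.forcingNum M ≤ G.antiForcingNum M ∧
      G.antiForcingNum M ≤ (G.maxDegree - 1) * G.forcingNum M := by
  obtain ⟨T, hT, hT_card⟩ := exists_isAntiForcingSet_ncard_eq_antiForcingNum hM
  obtain ⟨S, hS, hST⟩ := hT.exists_isForcingSet_ncard_le hM T.toFinite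
  obtain ⟨S', hS', hS'_card⟩ := exists_isForcingSet_ncard_eq_forcingNum hM
  obtain ⟨T', hT', hT'S'⟩ := hS'.exists_isAntiForcingSet_ncard_le hM.1
  refine ⟨?_, ?_⟩
  · calc G.forcingNum M ≤ S.ncard := forcingNum_le_ncard hS
      _ ≤ G.antiForcingNum M := hT_card ▸ hST
  · calc G.antiForcingNum M ≤ T'.ncard := antiForcingNum_le_ncard hT'
      _ ≤ (G.maxDegree - 1) * G.forcingNum M := hS'_card ▸ hT'S'
end

section
/- If a finite bipartite graph has a unique perfect matching, then it has two pendant vertices (vertices of degree one) lying in different color classes of the bipartition. -/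
open SimpleGraph

variable {V : Type*}

/-! Let `M` be a perfect matching and suppose no vertex of colour `b` is pendant. Every vertex
`v` of colour `b` then has a neighbour `g v` other than its partner in `M`, and `partner ∘ g`
(extended by `partner` to the other colour) maps every vertex into colour `b`. On the periodic
points `C` of this finite self-map it is a bijection, so the edges `c — g c` for `c ∈ C`,
together with the `M`-edges avoiding `C`, form a second perfect matching. Hence a unique perfect
matching forces a pendant vertex in each colour class. -/

open Function Set

theorem Function.periodicPts_nonempty {α : Type*} [Finite α] [Nonempty α] (f : α → α) :
    (periodicPts f).Nonempty := by
  obtain ⟨i, j, hij, heq⟩ :=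
    Finite.exists_ne_map_eq_of_infinite fun n : ℕ => f^[n] (Classical.arbitrary α)
  wlog hlt : i < j generalizing i j
  · exact this j i hij.symm heq.symm (by omega)
  refine ⟨f^[i] (Classical.arbitrary α), mk_mem_periodicPts (n := j - i) (by omega) ?_⟩
  change f^[j - i] (f^[i] _) = _
  rw [← iterate_add_apply, Nat.sub_add_cancel hlt.le]
  exact heq.symm

namespace SimpleGraph

variable {G : SimpleGraph V}

theorem exists_adj_ne_of_degree_ne_one {v w : V} [Fintype (G.neighborSet v)] (hvw : G.Adj v w)
    (hdeg : G.degree v ≠ 1) : ∃ u, G.Adj v u ∧ u ≠ w := by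
  by_contra! h
  exact hdeg (degree_eq_one_iff_existsUnique_adj.mpr ⟨w, hvw, h⟩)

theorem Coloring.eq_not_of_adj (col : G.Coloring Bool) {u v : V} (huv : G.Adj u v) :
    col v = !col u :=
  Bool.eq_not.mpr (col.valid huv).symm

namespace Subgraph

variable {M : G.Subgraph}

namespace IsPerfectMatching

variable (hM : M.IsPerfectMatching)

noncomputable def partner (v : V) : V :=
  (isPerfectMatching_iff.mp hM v).choose

theorem adj_partner (v : V) : M.Adj v (hM.partner v) :=
  (isPerfectMatching_iff.mp hM v).choose_spec.1

theorem adj_iff_eq_partner {v w : V} : M.Adj v w ↔ w = hM.partner v :=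
  ⟨(isPerfectMatching_iff.mp hM v).choose_spec.2 w, fun h => h ▸ hM.adj_partner v⟩

theorem partner_involutive : Involutive hM.partner := fun v =>
  (hM.adj_iff_eq_partner.mp (hM.adj_partner v).symm).symm

end IsPerfectMatching

/-- Replaces the `M`-edges at `C` by the edges `c — g c`. When `partner ∘ g` permutes `C`,
this switches `M` along the `M`-alternating cycles `c, g c, partner (g c), …`. -/
def switch (M : G.Subgraph) (C : Set V) (g : V → V) (hadj : ∀ c ∈ C, G.Adj c (g c)) :
    G.Subgraph where
  verts := univ
  Adj u v := (M.Adj u v ∧ u ∉ C ∧ v ∉ C) ∨ (u ∈ C ∧ v = g u) ∨ (v ∈ C ∧ u = g v)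
  adj_sub := by
    rintro u v (⟨huv, -⟩ | ⟨hu, rfl⟩ | ⟨hv, rfl⟩)
    exacts [M.adj_sub huv, hadj u hu, (hadj v hv).symm]
  edge_vert _ := mem_univ _
  symm := ⟨by
    rintro u v (⟨huv, hu, hv⟩ | huv | huv)
    exacts [Or.inl ⟨huv.symm, hv, hu⟩, Or.inr (Or.inr huv), Or.inr (Or.inl huv)]⟩

variable {C : Set V} {g : V → V} {hadj : ∀ c ∈ C, G.Adj c (g c)}

theorem IsPerfectMatching.switch (hM : M.IsPerfectMatching) (hdisj : ∀ c ∈ C, g c ∉ C)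
    (hbij : BijOn (hM.partner ∘ g) C C) : (M.switch C g hadj).IsPerfectMatching := by
  have hginj : InjOn g C := hbij.injOn.of_comp
  have hpartner_mem {v : V} : hM.partner v ∈ C ↔ ∃ c ∈ C, g c = v := by
    conv_lhs => rw [← hbij.image_eq]
    exact exists_congr fun c => and_congr_right fun _ => hM.partner_involutive.injective.eq_iff
  rw [isPerfectMatching_iff]
  intro v
  by_cases hv : v ∈ C
  · refine ⟨g v, Or.inr (Or.inl ⟨hv, rfl⟩), ?_⟩
    rintro w (⟨-, hv', -⟩ | ⟨-, rfl⟩ | ⟨hw, rfl⟩)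
    exacts [absurd hv hv', rfl, absurd hv (hdisj w hw)]
  by_cases hpv : hM.partner v ∈ C
  · obtain ⟨c, hc, rfl⟩ := hpartner_mem.mp hpv
    refine ⟨c, Or.inr (Or.inr ⟨hc, rfl⟩), ?_⟩
    rintro w (⟨hw, -, hw'⟩ | ⟨hv', -⟩ | ⟨hw, hgw⟩)
    exacts [absurd (hM.adj_iff_eq_partner.mp hw ▸ hpv) hw', absurd hv' hv,
      hginj hw hc hgw.symm]
  · refine ⟨hM.partner v, Or.inl ⟨hM.adj_partner v, hv, hpv⟩, ?_⟩
    rintro w (⟨hw, -⟩ | ⟨hv', -⟩ | ⟨hw, rfl⟩)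
    exacts [hM.adj_iff_eq_partner.mp hw, absurd hv' hv,
      absurd (hpartner_mem.mpr ⟨w, hw, rfl⟩) hpv]

theorem IsPerfectMatching.switch_ne (hM : M.IsPerfectMatching) {c : V} (hc : c ∈ C)
    (hgc : g c ≠ hM.partner c) : M.switch C g hadj ≠ M := by
  intro h
  have hswitch : (M.switch C g hadj).Adj c (g c) := Or.inr (Or.inl ⟨hc, rfl⟩)
  rw [h] at hswitch
  exact hgc (hM.adj_iff_eq_partner.mp hswitch)

end Subgraph

theorem Coloring.exists_degree_eq_one_of_existsUnique_isPerfectMatching [Fintype V]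
    [Nonempty V] [DecidableRel G.Adj] (col : G.Coloring Bool)
    (h : ∃! M : G.Subgraph, M.IsPerfectMatching) (b : Bool) :
    ∃ v, col v = b ∧ G.degree v = 1 := by
  obtain ⟨M, hM, huniq⟩ := h
  by_contra! hb
  have hsecond (v : V) (hv : col v = b) : ∃ w, G.Adj v w ∧ w ≠ hM.partner v :=
    exists_adj_ne_of_degree_ne_one (M.adj_sub (hM.adj_partner v)) (hb v hv)
  choose! g' hg'adj hg'ne using hsecond
  set g : V → V := fun v => if col v = b then g' v else v
  set C := periodicPts (hM.partner ∘ g)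
  have hcol_partner (v : V) : col (hM.partner v) = !col v :=
    col.eq_not_of_adj (M.adj_sub (hM.adj_partner v))
  have hC (c : V) (hc : c ∈ C) : col c = b := by
    obtain ⟨v, rfl⟩ := periodicPts_subset_range hc
    by_cases hv : col v = b
    · simp [g, hv, hcol_partner, col.eq_not_of_adj (hg'adj v hv)]
    · simp [g, hcol_partner, Bool.eq_not.mpr hv]
  have hadj (c : V) (hc : c ∈ C) : G.Adj c (g c) := by
    simpa [g, hC c hc] using hg'adj c (hC c hc)
  have hdisj (c : V) (hc : c ∈ C) : g c ∉ C := fun hgc => by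
    simpa [hC c hc, hC _ hgc] using col.eq_not_of_adj (hadj c hc)
  obtain ⟨c, hc⟩ := periodicPts_nonempty (hM.partner ∘ g)
  refine hM.switch_ne (hadj := hadj) hc ?_ (huniq _ (hM.switch hdisj (bijOn_periodicPts _)))
  simpa [g, hC c hc] using hg'ne c (hC c hc)

end SimpleGraph

/-- If a finite bipartite graph (with a 2-coloring `col`) has a unique perfect matching,
then it has two pendant vertices lying in different color classes. -/
theorem unique_perfect_matching_pendant_vertices (G : SimpleGraph V) [Fintype V]
    [Nonempty V] [DecidableRel G.Adj] (col : G.Coloring Bool)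
    (h : ∃! M : G.Subgraph, M.IsPerfectMatching) :
    ∃ u v : V, G.degree u = 1 ∧ G.degree v = 1 ∧ col u ≠ col v := by
  obtain ⟨u, hu, hu1⟩ := col.exists_degree_eq_one_of_existsUnique_isPerfectMatching h true
  obtain ⟨v, hv, hv1⟩ := col.exists_degree_eq_one_of_existsUnique_isPerfectMatching h false
  exact ⟨u, v, hu1, hv1, by simp [hu, hv]⟩
end

section
/- Let G be a graph with perfect matching M, and let S ⊆ E(G)\M be an anti-forcing set of M. Replacing each edge e ∈ S by an edge of M adjacent to e yields a forcing set S' of M with |S'| ≤ |S|. -/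
open SimpleGraph

variable {V : Type*}

theorem SimpleGraph.Subgraph.IsMatching.eq_of_mem_edgeSet_of_mem {G : SimpleGraph V}
    {N : G.Subgraph} (hN : N.IsMatching) {e f : Sym2 V} (he : e ∈ N.edgeSet)
    (hf : f ∈ N.edgeSet) {x : V} (hxe : x ∈ e) (hxf : x ∈ f) : e = f := by
  obtain ⟨y, rfl⟩ := Sym2.mem_iff_exists.mp hxe
  obtain ⟨z, rfl⟩ := Sym2.mem_iff_exists.mp hxf
  rw [hN.eq_of_adj_left (Subgraph.mem_edgeSet.mp he) (Subgraph.mem_edgeSet.mp hf)]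

/-- A matching containing `g '' S` cannot also contain an edge `e ∈ S`: it would contain the
distinct edges `e ∉ M` and `g e ∈ M` meeting at a common vertex. -/
theorem SimpleGraph.IsAntiForcingSet.disjoint_of_image_subset {G : SimpleGraph V}
    {M : G.Subgraph} {S : Set (Sym2 V)} (hS : G.IsAntiForcingSet M S) {g : Sym2 V → Sym2 V}
    (hg : ∀ e ∈ S, g e ∈ M.edgeSet ∧ ∃ x : V, x ∈ e ∧ x ∈ g e) {N : G.Subgraph}
    (hN : N.IsMatching) (hgN : g '' S ⊆ N.edgeSet) : Disjoint N.edgeSet S := by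
  refine Set.disjoint_left.mpr fun e heN heS ↦ ?_
  obtain ⟨hgeM, x, hxe, hxge⟩ := hg e heS
  have hge : e = g e := hN.eq_of_mem_edgeSet_of_mem heN (hgN ⟨e, heS, rfl⟩) hxe hxge
  exact (hS.1 heS).2 (hge ▸ hgeM)

theorem image_of_antiforcing_is_forcing_general (G : SimpleGraph V) [Fintype V]
    (M : G.Subgraph)
    (S : Set (Sym2 V)) (hS : G.IsAntiForcingSet M S)
    (g : Sym2 V → Sym2 V)
    (hg : ∀ e ∈ S, g e ∈ M.edgeSet ∧ ∃ x : V, x ∈ e ∧ x ∈ g e) :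
    G.IsForcingSet M (g '' S) ∧ (g '' S).ncard ≤ S.ncard := by
  refine ⟨⟨?_, fun N hN hgN ↦ hS.2 N hN (hS.disjoint_of_image_subset hg hN.1 hgN)⟩,
    Set.ncard_image_le S.toFinite⟩
  rintro _ ⟨e, he, rfl⟩
  exact (hg e he).1

/-- Replacing each edge `e` of an anti-forcing set `S` of `M` by an adjacent edge of `M`
(via a choice function `g`) yields a forcing set `S' = g '' S` of `M` with `|S'| ≤ |S|`. -/
theorem image_of_antiforcing_is_forcing (G : SimpleGraph V) [Fintype V]
    (M : G.Subgraph) (hM : M.IsPerfectMatching)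
    (S : Set (Sym2 V)) (hS : G.IsAntiForcingSet M S)
    (g : Sym2 V → Sym2 V)
    (hg : ∀ e ∈ S, g e ∈ M.edgeSet ∧ ∃ x : V, x ∈ e ∧ x ∈ g e) :
    G.IsForcingSet M (g '' S) ∧ (g '' S).ncard ≤ S.ncard :=
  image_of_antiforcing_is_forcing_general G M S hS g hg
end

section
/- Let G be a graph with perfect matching M and let F ⊆ M be a forcing set of M. Then the set F' of all edges of G not in M that are incident with an endpoint of some edge of F is an anti-forcing set of M, and |F'| ≤ (Δ−1)|F| where Δ is the maximum degree of G. -/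
open SimpleGraph

variable {V : Type*}

lemma Set.ncard_biUnion_le_mul {ι α : Type*} {t : Set ι} (ht : t.Finite) {s : ι → Set α} {n : ℕ}
    (hs : ∀ i ∈ t, (s i).ncard ≤ n) : (⋃ i ∈ t, s i).ncard ≤ n * t.ncard := by
  obtain ⟨t, rfl⟩ := ht.exists_finset_coe
  simp only [Finset.mem_coe, Set.ncard_coe_finset] at hs ⊢
  calc (⋃ i ∈ t, s i).ncard ≤ ∑ i ∈ t, (s i).ncard := t.set_ncard_biUnion_le s
    _ ≤ t.card • n := Finset.sum_le_card_nsmul t _ n hs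
    _ = n * t.card := by rw [smul_eq_mul, mul_comm]

namespace SimpleGraph

variable {G : SimpleGraph V}

lemma ncard_incidenceSet_diff_singleton_le [Fintype V] [DecidableRel G.Adj] {v : V}
    {e : Sym2 V} (he : e ∈ G.incidenceSet v) :
    (G.incidenceSet v \ {e}).ncard ≤ G.maxDegree - 1 := by
  classical
  rw [Set.ncard_sdiff_singleton_of_mem he, Set.ncard_eq_toFinset_card', Set.toFinset_card,
    card_incidenceSet_eq_degree]
  exact Nat.sub_le_sub_right (G.degree_le_maxDegree v) 1

lemma Subgraph.IsPerfectMatching.adj_of_neighborSet_subset {M N : G.Subgraph}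
    (hN : N.IsPerfectMatching) (hM : M.IsMatching) {v u : V}
    (hNM : N.neighborSet v ⊆ M.neighborSet v) (hvu : M.Adj v u) : N.Adj v u := by
  obtain ⟨w, hvw, -⟩ := hN.1 (hN.2 v)
  rwa [hM.eq_of_adj_left hvu (hNM hvw)]

/-- An edge `f = vu` of `F` lies in every perfect matching `N` avoiding `S`: the `N`-edge at `v`
cannot leave `M`, so it is `f` itself. -/
lemma IsForcingSet.isAntiForcingSet {M : G.Subgraph} (hM : M.IsMatching) {F S : Set (Sym2 V)}
    (hF : G.IsForcingSet M F) (hS : S ⊆ G.edgeSet \ M.edgeSet)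
    (hcover : ∀ f ∈ F, ∃ v ∈ f, G.incidenceSet v \ M.edgeSet ⊆ S) :
    G.IsAntiForcingSet M S := by
  refine ⟨hS, fun N hN hNS => hF.2 N hN fun f hf => ?_⟩
  obtain ⟨v, hv, hvS⟩ := hcover f hf
  have hMf : M.Adj v (Sym2.Mem.other hv) := by
    rw [← Subgraph.mem_edgeSet, Sym2.other_spec hv]
    exact hF.1 hf
  have hNM : N.neighborSet v ⊆ M.neighborSet v := fun w (hvw : N.Adj v w) => by
    by_contra hMw
    exact Set.disjoint_left.mp hNS hvw (hvS ⟨⟨N.adj_sub hvw, Sym2.mem_mk_left v w⟩, hMw⟩)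
  rw [← Sym2.other_spec hv]
  exact hN.adj_of_neighborSet_subset hM hNM hMf

lemma ncard_nonMatching_incident_le [Fintype V] [DecidableRel G.Adj] (M : G.Subgraph)
    {F : Set (Sym2 V)} (hFM : F ⊆ M.edgeSet) (h : Sym2 V → V) (hh : ∀ e ∈ F, h e ∈ e) :
    {e' | e' ∈ G.edgeSet ∧ e' ∉ M.edgeSet ∧ ∃ f ∈ F, h f ∈ e'}.ncard ≤
      (G.maxDegree - 1) * F.ncard := by
  have hsub : {e' | e' ∈ G.edgeSet ∧ e' ∉ M.edgeSet ∧ ∃ f ∈ F, h f ∈ e'} ⊆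
      ⋃ f ∈ F, G.incidenceSet (h f) \ {f} := by
    rintro e ⟨he, heM, f, hf, hfe⟩
    refine Set.mem_biUnion hf ⟨⟨he, hfe⟩, ?_⟩
    rintro rfl
    exact heM (hFM hf)
  refine (Set.ncard_le_ncard hsub (Set.toFinite _)).trans
    (Set.ncard_biUnion_le_mul (Set.toFinite F) fun f hf => ?_)
  exact ncard_incidenceSet_diff_singleton_le ⟨M.edgeSet_subset (hFM hf), hh f hf⟩

end SimpleGraph

/-- If `F ⊆ M` is a forcing set of `M` and, for each edge of `F`, one of its endpoints is
chosen (via `h`), then the set `F'` of all edges of `G` not in `M` incident with a chosen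
endpoint of some edge of `F` is an anti-forcing set of `M`, and `|F'| ≤ (Δ−1)·|F|`. -/
theorem neighborhood_of_forcing_is_antiforcing (G : SimpleGraph V) [Fintype V]
    [DecidableRel G.Adj] (M : G.Subgraph) (hM : M.IsPerfectMatching)
    (F : Set (Sym2 V)) (hF : G.IsForcingSet M F)
    (h : Sym2 V → V) (hh : ∀ e ∈ F, h e ∈ e) :
    G.IsAntiForcingSet M
        {e' | e' ∈ G.edgeSet ∧ e' ∉ M.edgeSet ∧ ∃ f ∈ F, h f ∈ e'} ∧
      {e' | e' ∈ G.edgeSet ∧ e' ∉ M.edgeSet ∧ ∃ f ∈ F, h f ∈ e'}.ncard ≤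
        (G.maxDegree - 1) * F.ncard := by
  refine ⟨hF.isAntiForcingSet hM.1 (fun e he => ⟨he.1, he.2.1⟩) fun f hf => ?_,
    ncard_nonMatching_incident_le M hF.1 h hh⟩
  exact ⟨h f, hh f hf, fun e ⟨⟨he, hve⟩, heM⟩ => ⟨he, heM, f, hf, hve⟩⟩
end
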